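/- Let X be a connected graph with basepoint x₀. The homology classes of loops based at x₀ form a group under composition ⟦γ⟧⟦δ⟧ = ⟦γδ⟧, and the map sending ⟦γ⟧ to the 1-chain c_γ is a well-defined group isomorphism from this group onto the group Z₁(X,ℤ) of integral 1-cycles. -/

import Mathlib

/-- A graph in the sense of Sunada's topological crystallography: a set of vertices,
a set of edges, source and target maps, and a fixed-point free involution sending
each edge to its inverse. -/
structure SunadaGraph where
  V : Type
  E : Type
  s : E → V
  t : E → V
  inv : E → E
  s_inv : ∀ e, s (inv e) = t e
  t_inv : ∀ e, t (inv e) = s e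
  inv_inv : ∀ e, inv (inv e) = e
  inv_ne : ∀ e, inv e ≠ e

namespace SunadaGraph

variable (X : SunadaGraph)

/-- `X.IsPath x y γ` : the word of edges `γ` is a path from `x` to `y` in `X`. -/
inductive IsPath : X.V → X.V → List X.E → Prop
  | nil (x : X.V) : IsPath x x []
  | cons (e : X.E) {y : X.V} {γ : List X.E} (h : IsPath (X.t e) y γ) :
      IsPath (X.s e) y (e :: γ)

/-- A graph is connected if any two vertices are joined by a path. -/
def Connected : Prop := ∀ x y : X.V, ∃ γ : List X.E, X.IsPath x y γ

/-- An edge is a bridge if there is no path from its target to its source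
avoiding both the edge and its inverse. -/
def IsBridge (e : X.E) : Prop :=
  ¬ ∃ γ : List X.E, X.IsPath (X.t e) (X.s e) γ ∧ e ∉ γ ∧ X.inv e ∉ γ

/-- The space `C₁(X,ℝ)` of real 1-chains: formal linear combinations of edges
with `e⁻¹ = -e`, realized as finitely supported functions `c : E → ℝ` with
`c(e⁻¹) = - c(e)`. -/
noncomputable def C1 : Submodule ℝ (X.E →₀ ℝ) where
  carrier := {c | ∀ e, c (X.inv e) = - c e}
  add_mem' := by
    intro a b ha hb e
    simp only [Finsupp.add_apply, ha e, hb e]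
    ring
  zero_mem' := by intro e; simp
  smul_mem' := by
    intro r c hc e
    simp only [Finsupp.smul_apply, hc e, smul_eq_mul]
    ring

/-- The 1-chain associated to a single edge. -/
noncomputable def edgeChain (e : X.E) : ↥X.C1 :=
  ⟨Finsupp.single e 1 - Finsupp.single (X.inv e) 1, by
    intro f
    classical
    have h1 : (e = X.inv f) ↔ (X.inv e = f) := by
      constructor
      · rintro rfl; exact X.inv_inv f
      · rintro rfl; exact (X.inv_inv e).symm
    have h2 : (X.inv e = X.inv f) ↔ (e = f) := by
      constructor
      · intro h
        have := congrArg X.inv h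
        rwa [X.inv_inv, X.inv_inv] at this
      · rintro rfl; rfl
    simp only [Finsupp.sub_apply, Finsupp.single_apply, h1, h2]
    ring⟩

/-- The 1-chain `c_γ` of a path `γ`. -/
noncomputable def pathChain (γ : List X.E) : ↥X.C1 := (γ.map X.edgeChain).sum

/-- The inner product on `C₁(X,ℝ)` for which the edges form an orthonormal basis
(with `e⁻¹` counting as the negative of `e`). -/
noncomputable def chainInner (c d : ↥X.C1) : ℝ :=
  (1/2) * ((c : X.E →₀ ℝ).sum fun e x => x * (d : X.E →₀ ℝ) e)

/-- The boundary of a 1-chain. -/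
noncomputable def boundary (c : ↥X.C1) : X.V →₀ ℝ :=
  (c : X.E →₀ ℝ).sum fun e x => x • (Finsupp.single (X.t e) (1:ℝ) - Finsupp.single (X.s e) 1)

/-- A 1-cycle is a 1-chain with vanishing boundary. -/
def IsCycle (c : ↥X.C1) : Prop := X.boundary c = 0

/-- An integral 1-chain: all coefficients are integers. -/
def IsIntegral (c : ↥X.C1) : Prop := ∀ e, ∃ n : ℤ, (c : X.E →₀ ℝ) e = (n : ℝ)

/-- The support of a 1-chain: the set of edges with positive coefficient. -/
def chainSupp (c : ↥X.C1) : Set X.E := {e | 0 < (c : X.E →₀ ℝ) e}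

/-- `p` is the orthogonal projection of `C₁(X,ℝ)` onto the space `Z₁(X,ℝ)` of 1-cycles:
it takes values in `Z₁(X,ℝ)` and `c - p c` is orthogonal to every 1-cycle. -/
def IsOrthoProj (p : ↥X.C1 → ↥X.C1) : Prop :=
  (∀ c, X.IsCycle (p c)) ∧ (∀ c z, X.IsCycle z → X.chainInner (c - p c) z = 0)

/-- Two paths from `x` to `y` are homologous if one can be obtained from the other
by repeatedly inserting or deleting subwords `e e⁻¹`, and/or replacing a subword
`στ` by `τσ` where `σ` and `τ` are loops based at the same vertex. -/
inductive Homologous : X.V → X.V → List X.E → List X.E → Prop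
  | refl {x y : X.V} (γ : List X.E) (h : X.IsPath x y γ) : Homologous x y γ γ
  | cancel {x y : X.V} (γ δ : List X.E) (e : X.E)
      (h : X.IsPath x y (γ ++ e :: X.inv e :: δ)) (h' : X.IsPath x y (γ ++ δ)) :
      Homologous x y (γ ++ e :: X.inv e :: δ) (γ ++ δ)
  | swap {x y : X.V} (γ σ τ δ : List X.E) (v : X.V)
      (hσ : X.IsPath v v σ) (hτ : X.IsPath v v τ)
      (h : X.IsPath x y (γ ++ (σ ++ (τ ++ δ))))
      (h' : X.IsPath x y (γ ++ (τ ++ (σ ++ δ)))) :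
      Homologous x y (γ ++ (σ ++ (τ ++ δ))) (γ ++ (τ ++ (σ ++ δ)))
  | symm {x y : X.V} {a b : List X.E} (h : Homologous x y a b) : Homologous x y b a
  | trans {x y : X.V} {a b c : List X.E} (h1 : Homologous x y a b)
      (h2 : Homologous x y b c) : Homologous x y a c

/-- A simple path: no vertex is visited twice. -/
def IsSimplePath (x y : X.V) (γ : List X.E) : Prop :=
  X.IsPath x y γ ∧ (x :: γ.map X.t).Nodup

/-- A simple loop based at `x`: a loop in which every vertex other than `x` occurs
at most once and `x` occurs only as the initial and final vertex. -/
def IsSimpleLoop (x : X.V) (γ : List X.E) : Prop :=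
  X.IsPath x x γ ∧ (x :: (γ.map X.t).dropLast).Nodup

/-- A reduced word: no subword of the form `e e⁻¹`. -/
def Reduced (γ : List X.E) : Prop := γ.Chain' (fun a b => b ≠ X.inv a)

/-- A spanning tree: a set of edges, closed under inversion, such that the spanning
subgraph it determines is connected and has no nonempty reduced loops. -/
def IsSpanningTree (S : Set X.E) : Prop :=
  (∀ e ∈ S, X.inv e ∈ S) ∧
  (∀ x y : X.V, ∃ γ : List X.E, X.IsPath x y γ ∧ ∀ e ∈ γ, e ∈ S) ∧
  (∀ (x : X.V) (γ : List X.E), X.IsPath x x γ → (∀ e ∈ γ, e ∈ S) → X.Reduced γ → γ = [])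

/-- The quotient of a set of 1-chains by the translation action of the
integral 1-cycles. -/
def transQuot (S : Set ↥X.C1) : Type :=
  Quot (fun a b : S => ∃ z : ↥X.C1, X.IsCycle z ∧ X.IsIntegral z ∧ (b : ↥X.C1) = (a : ↥X.C1) + z)

end SunadaGraph
namespace SunadaGraph

section Lemmas

variable {X : SunadaGraph}

/-- Concatenation of paths. -/
theorem IsPath.append {x y z : X.V} {γ δ : List X.E}
    (h1 : X.IsPath x y γ) : X.IsPath y z δ → X.IsPath x z (γ ++ δ) := by
  induction h1 with
  | nil _ => intro h2; simpa using h2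
  | cons e h ih => intro h2; exact .cons e (ih h2)

theorem isPath_single (X : SunadaGraph) (e : X.E) : X.IsPath (X.s e) (X.t e) [e] :=
  .cons e (.nil _)

theorem isPath_single' (X : SunadaGraph) (e : X.E) : X.IsPath (X.t e) (X.s e) [X.inv e] := by
  have := X.isPath_single (X.inv e)
  rwa [X.s_inv, X.t_inv] at this

/-- The endpoint of a path starting at `x`. -/
def endFrom (X : SunadaGraph) (x : X.V) (γ : List X.E) : X.V := γ.foldl (fun _ e => X.t e) x

theorem IsPath.endFrom_eq {x y : X.V} {γ : List X.E} (h : X.IsPath x y γ) :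
    X.endFrom x γ = y := by
  induction h with
  | nil x => rfl
  | cons e h ih => exact ih

/-- Homologous paths are paths with the same endpoints. -/
theorem Homologous.isPath {x y : X.V} {a b : List X.E} (h : X.Homologous x y a b) :
    X.IsPath x y a ∧ X.IsPath x y b := by
  induction h with
  | refl γ h => exact ⟨h, h⟩
  | cancel γ δ e h h' => exact ⟨h, h'⟩
  | swap γ σ τ δ v hσ hτ h h' => exact ⟨h, h'⟩
  | symm h ih => exact ⟨ih.2, ih.1⟩
  | trans h1 h2 ih1 ih2 => exact ⟨ih1.1, ih2.2⟩

/-- Appending a fixed path preserves homology. -/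
theorem Homologous.append_right {x y z : X.V} {a b c : List X.E}
    (h : X.Homologous x y a b) (hc : X.IsPath y z c) :
    X.Homologous x z (a ++ c) (b ++ c) := by
  induction h with
  | refl γ hγ => exact .refl _ (hγ.append hc)
  | cancel γ δ e h h' =>
      have h1 : X.IsPath x z (γ ++ e :: X.inv e :: (δ ++ c)) := by
        have := h.append hc; simpa using this
      have h2 : X.IsPath x z (γ ++ (δ ++ c)) := by
        have := h'.append hc; simpa using this
      have := Homologous.cancel γ (δ ++ c) e h1 h2
      simpa using this
  | swap γ σ τ δ v hσ hτ h h' =>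
      have h1 : X.IsPath x z (γ ++ (σ ++ (τ ++ (δ ++ c)))) := by
        have := h.append hc; simpa using this
      have h2 : X.IsPath x z (γ ++ (τ ++ (σ ++ (δ ++ c)))) := by
        have := h'.append hc; simpa using this
      have := Homologous.swap γ σ τ (δ ++ c) v hσ hτ h1 h2
      simpa using this
  | symm h ih => exact ih.symm
  | trans h1 h2 ih1 ih2 => exact ih1.trans ih2

/-- Prepending a fixed path preserves homology. -/
theorem Homologous.prepend_left {w x y : X.V} {a b c : List X.E}
    (hc : X.IsPath w x c) (h : X.Homologous x y a b) :
    X.Homologous w y (c ++ a) (c ++ b) := by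
  induction h with
  | refl γ hγ => exact .refl _ (hc.append hγ)
  | cancel γ δ e h h' =>
      have h1 : X.IsPath w y ((c ++ γ) ++ e :: X.inv e :: δ) := by
        have := hc.append h; simpa using this
      have h2 : X.IsPath w y ((c ++ γ) ++ δ) := by
        have := hc.append h'; simpa using this
      have := Homologous.cancel (c ++ γ) δ e h1 h2
      simpa using this
  | swap γ σ τ δ v hσ hτ h h' =>
      have h1 : X.IsPath w y ((c ++ γ) ++ (σ ++ (τ ++ δ))) := by
        have := hc.append h; simpa using this
      have h2 : X.IsPath w y ((c ++ γ) ++ (τ ++ (σ ++ δ))) := by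
        have := hc.append h'; simpa using this
      have := Homologous.swap (c ++ γ) σ τ δ v hσ hτ h1 h2
      simpa using this
  | symm h ih => exact ih.symm
  | trans h1 h2 ih1 ih2 => exact ih1.trans ih2

/-- The reverse of a word of edges: reverse the order and invert each edge. -/
def revP (X : SunadaGraph) (γ : List X.E) : List X.E := (γ.map X.inv).reverse

theorem IsPath.revP {x y : X.V} {γ : List X.E} (h : X.IsPath x y γ) :
    X.IsPath y x (X.revP γ) := by
  induction h with
  | nil x => exact .nil x
  | cons e h ih =>
      have := ih.append (X.isPath_single' e)
      simpa [SunadaGraph.revP] using this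

theorem Homologous.revP {x y : X.V} {a b : List X.E} (h : X.Homologous x y a b) :
    X.Homologous y x (X.revP a) (X.revP b) := by
  induction h with
  | refl γ hγ => exact .refl _ hγ.revP
  | cancel γ δ e h h' =>
      have key : X.revP (γ ++ e :: X.inv e :: δ) = X.revP δ ++ e :: X.inv e :: X.revP γ := by
        simp [SunadaGraph.revP, X.inv_inv]
      have key2 : X.revP (γ ++ δ) = X.revP δ ++ X.revP γ := by
        simp [SunadaGraph.revP]
      have p1 : X.IsPath y x (X.revP δ ++ e :: X.inv e :: X.revP γ) := by
        have := h.revP; rwa [key] at this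
      have p2 : X.IsPath y x (X.revP δ ++ X.revP γ) := by
        have := h'.revP; rwa [key2] at this
      rw [key, key2]
      exact Homologous.cancel _ _ _ p1 p2
  | swap γ σ τ δ v hσ hτ h h' =>
      have key : X.revP (γ ++ (σ ++ (τ ++ δ)))
          = X.revP δ ++ (X.revP τ ++ (X.revP σ ++ X.revP γ)) := by
        simp [SunadaGraph.revP]
      have key2 : X.revP (γ ++ (τ ++ (σ ++ δ)))
          = X.revP δ ++ (X.revP σ ++ (X.revP τ ++ X.revP γ)) := by
        simp [SunadaGraph.revP]
      have p1 : X.IsPath y x (X.revP δ ++ (X.revP τ ++ (X.revP σ ++ X.revP γ))) := by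
        have := h.revP; rwa [key] at this
      have p2 : X.IsPath y x (X.revP δ ++ (X.revP σ ++ (X.revP τ ++ X.revP γ))) := by
        have := h'.revP; rwa [key2] at this
      rw [key, key2]
      exact Homologous.swap _ _ _ _ v hτ.revP hσ.revP p1 p2
  | symm h ih => exact ih.symm
  | trans h1 h2 ih1 ih2 => exact ih1.trans ih2

/-- `γ⁻¹ γ` is homologous to the trivial path. -/
theorem homologous_revP_append {x y : X.V} {γ : List X.E} (h : X.IsPath x y γ) :
    X.Homologous y y (X.revP γ ++ γ) [] := by
  induction h with
  | nil x => exact .refl [] (.nil x)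
  | @cons e y' γ' h ih =>
      have p0 : X.IsPath (X.t e) y' (X.inv e :: e :: γ') := by
        have tail : X.IsPath (X.t (X.inv e)) y' (e :: γ') := by
          rw [X.t_inv]; exact .cons e h
        have := IsPath.cons (X.inv e) tail
        rwa [X.s_inv] at this
      have p1 : X.IsPath y' y' (X.revP γ' ++ X.inv e :: e :: γ') := h.revP.append p0
      have p2 : X.IsPath y' y' (X.revP γ' ++ γ') := h.revP.append h
      have step : X.Homologous y' y' (X.revP γ' ++ X.inv e :: e :: γ') (X.revP γ' ++ γ') := by
        have := Homologous.cancel (X.revP γ') γ' (X.inv e)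
          (by rwa [X.inv_inv]) (by exact p2)
        rwa [X.inv_inv] at this
      have goal_eq : X.revP (e :: γ') ++ e :: γ' = X.revP γ' ++ X.inv e :: e :: γ' := by
        simp [SunadaGraph.revP]
      rw [goal_eq]
      exact step.trans ih

end Lemmas

end SunadaGraph
namespace SunadaGraph

/-- A map of graphs. -/
structure Hom (X Y : SunadaGraph) where
  vMap : X.V → Y.V
  eMap : X.E → Y.E
  map_s : ∀ e, Y.s (eMap e) = vMap (X.s e)
  map_t : ∀ e, Y.t (eMap e) = vMap (X.t e)
  map_inv : ∀ e, Y.inv (eMap e) = eMap (X.inv e)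

/-- Composition of maps of graphs. -/
def Hom.comp {X Y Z : SunadaGraph} (f : Hom Y Z) (g : Hom X Y) : Hom X Z where
  vMap := fun v => f.vMap (g.vMap v)
  eMap := fun e => f.eMap (g.eMap e)
  map_s := fun e => by rw [f.map_s, g.map_s]
  map_t := fun e => by rw [f.map_t, g.map_t]
  map_inv := fun e => by rw [f.map_inv, g.map_inv]

/-- The identity map of graphs. -/
def Hom.idHom (X : SunadaGraph) : Hom X X :=
  ⟨fun v => v, fun e => e, fun _ => rfl, fun _ => rfl, fun _ => rfl⟩

theorem IsPath.map {X Y : SunadaGraph} {x y : X.V} {γ : List X.E}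
    (h : X.IsPath x y γ) (f : Hom X Y) :
    Y.IsPath (f.vMap x) (f.vMap y) (γ.map f.eMap) := by
  induction h with
  | nil x => exact .nil _
  | cons e h ih =>
      rw [← f.map_t] at ih
      have := IsPath.cons (f.eMap e) ih
      rwa [f.map_s] at this

/-- An automorphism of a graph. -/
structure Aut (X : SunadaGraph) where
  toHom : Hom X X
  invHom : Hom X X
  left_inv : Hom.comp invHom toHom = Hom.idHom X
  right_inv : Hom.comp toHom invHom = Hom.idHom X

theorem Aut.ext' {X : SunadaGraph} {f g : Aut X} (h : f.toHom = g.toHom) : f = g := by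
  obtain ⟨ft, fi, fl, fr⟩ := f
  obtain ⟨gt, gi, gl, gr⟩ := g
  simp only at h
  subst h
  have key : fi = gi := by
    calc fi = Hom.comp fi (Hom.idHom X) := rfl
      _ = Hom.comp fi (Hom.comp ft gi) := by rw [gr]
      _ = Hom.comp (Hom.comp fi ft) gi := rfl
      _ = Hom.comp (Hom.idHom X) gi := by rw [fl]
      _ = gi := rfl
  subst key
  rfl

/-- The automorphism group of a graph. -/
instance (X : SunadaGraph) : Group (Aut X) where
  mul f g := ⟨Hom.comp f.toHom g.toHom, Hom.comp g.invHom f.invHom,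
    by
      show Hom.comp (Hom.comp g.invHom f.invHom) (Hom.comp f.toHom g.toHom) = Hom.idHom X
      calc Hom.comp (Hom.comp g.invHom f.invHom) (Hom.comp f.toHom g.toHom)
          = Hom.comp g.invHom (Hom.comp (Hom.comp f.invHom f.toHom) g.toHom) := rfl
        _ = Hom.comp g.invHom (Hom.comp (Hom.idHom X) g.toHom) := by rw [f.left_inv]
        _ = Hom.comp g.invHom g.toHom := rfl
        _ = Hom.idHom X := g.left_inv,
    by
      show Hom.comp (Hom.comp f.toHom g.toHom) (Hom.comp g.invHom f.invHom) = Hom.idHom X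
      calc Hom.comp (Hom.comp f.toHom g.toHom) (Hom.comp g.invHom f.invHom)
          = Hom.comp f.toHom (Hom.comp (Hom.comp g.toHom g.invHom) f.invHom) := rfl
        _ = Hom.comp f.toHom (Hom.comp (Hom.idHom X) f.invHom) := by rw [g.right_inv]
        _ = Hom.comp f.toHom f.invHom := rfl
        _ = Hom.idHom X := f.right_inv⟩
  one := ⟨Hom.idHom X, Hom.idHom X, rfl, rfl⟩
  inv f := ⟨f.invHom, f.toHom, f.right_inv, f.left_inv⟩
  mul_assoc f g h := Aut.ext' rfl
  one_mul f := Aut.ext' rfl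
  mul_one f := Aut.ext' rfl
  inv_mul_cancel f := Aut.ext' f.left_inv

variable (X : SunadaGraph)

/-- Paths in `X` starting at the basepoint `x₀`. -/
def PathFrom (x₀ : X.V) : Type := {γ : List X.E // ∃ y, X.IsPath x₀ y γ}

/-- Two paths from the basepoint are related if they are homologous. -/
def AtomRel (x₀ : X.V) (a b : X.PathFrom x₀) : Prop := ∃ y, X.Homologous x₀ y a.1 b.1

/-- The atoms: homology classes of paths starting at the basepoint.  These are the
vertices of the maximal abelian cover. -/
def Atom (x₀ : X.V) : Type := Quot (X.AtomRel x₀)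

/-- Data for an edge of the maximal abelian cover: a path `α` from the basepoint
together with an edge `e` with `s(e)` the endpoint of `α`. -/
def BarBase (x₀ : X.V) : Type := {q : List X.E × X.E // X.IsPath x₀ (X.s q.2) q.1}

def BarRel (x₀ : X.V) (q q' : X.BarBase x₀) : Prop :=
  q.1.2 = q'.1.2 ∧ X.Homologous x₀ (X.s q.1.2) q.1.1 q'.1.1

/-- The edges of the maximal abelian cover. -/
def BarEdge (x₀ : X.V) : Type := Quot (X.BarRel x₀)

def barS (x₀ : X.V) : X.BarEdge x₀ → X.Atom x₀ :=
  Quot.lift (fun q => Quot.mk _ ⟨q.1.1, ⟨X.s q.1.2, q.2⟩⟩)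
    (fun q q' h => Quot.sound ⟨X.s q.1.2, h.2⟩)

def barT (x₀ : X.V) : X.BarEdge x₀ → X.Atom x₀ :=
  Quot.lift
    (fun q => Quot.mk _ ⟨q.1.1 ++ [q.1.2], ⟨X.t q.1.2, q.2.append (X.isPath_single q.1.2)⟩⟩)
    (fun q q' h => by
      apply Quot.sound
      refine ⟨X.t q.1.2, ?_⟩
      show X.Homologous x₀ (X.t q.1.2) (q.1.1 ++ [q.1.2]) (q'.1.1 ++ [q'.1.2])
      rw [← h.1]
      exact Homologous.append_right h.2 (X.isPath_single q.1.2))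

def barInv (x₀ : X.V) : X.BarEdge x₀ → X.BarEdge x₀ :=
  Quot.lift
    (fun q => Quot.mk _ ⟨(q.1.1 ++ [q.1.2], X.inv q.1.2), by
      rw [X.s_inv]; exact q.2.append (X.isPath_single q.1.2)⟩)
    (fun q q' h => by
      apply Quot.sound
      constructor
      · show X.inv q.1.2 = X.inv q'.1.2
        rw [h.1]
      · show X.Homologous x₀ (X.s (X.inv q.1.2)) (q.1.1 ++ [q.1.2]) (q'.1.1 ++ [q'.1.2])
        rw [X.s_inv, ← h.1]
        exact Homologous.append_right h.2 (X.isPath_single q.1.2))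

def eproj (x₀ : X.V) : X.BarEdge x₀ → X.E := Quot.lift (fun q => q.1.2) (fun _ _ h => h.1)

def atomEnd (x₀ : X.V) : X.Atom x₀ → X.V :=
  Quot.lift (fun γ => X.endFrom x₀ γ.1)
    (fun a b h => by
      show X.endFrom x₀ a.1 = X.endFrom x₀ b.1
      obtain ⟨y, hy⟩ := h
      obtain ⟨ha, hb⟩ := hy.isPath
      rw [ha.endFrom_eq, hb.endFrom_eq])

private theorem isPath_pair (e : X.E) : X.IsPath (X.s e) (X.s e) [e, X.inv e] := by
  have tail : X.IsPath (X.t (X.inv e)) (X.s e) [] := by rw [X.t_inv]; exact .nil _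
  have mid : X.IsPath (X.t e) (X.s e) [X.inv e] := by
    have := IsPath.cons (X.inv e) tail
    rwa [X.s_inv] at this
  exact .cons e mid

private theorem hom_cancel_pair (x₀ : X.V) (q : X.BarBase x₀) :
    X.Homologous x₀ (X.s q.1.2) ((q.1.1 ++ [q.1.2]) ++ [X.inv q.1.2]) q.1.1 := by
  have p1 : X.IsPath x₀ (X.s q.1.2) (q.1.1 ++ q.1.2 :: X.inv q.1.2 :: []) :=
    q.2.append (X.isPath_pair q.1.2)
  have p2 : X.IsPath x₀ (X.s q.1.2) (q.1.1 ++ []) := by simpa using q.2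
  have := Homologous.cancel q.1.1 [] q.1.2 p1 p2
  simpa using this

/-- The maximal abelian cover of `X` relative to the basepoint `x₀`. -/
def Bar (x₀ : X.V) : SunadaGraph where
  V := X.Atom x₀
  E := X.BarEdge x₀
  s := X.barS x₀
  t := X.barT x₀
  inv := X.barInv x₀
  s_inv := fun e =>
    @Quot.ind _ _ (fun e => X.barS x₀ (X.barInv x₀ e) = X.barT x₀ e)
      (fun q => rfl) e
  t_inv := fun e =>
    @Quot.ind _ _ (fun e => X.barT x₀ (X.barInv x₀ e) = X.barS x₀ e)
      (fun q => Quot.sound ⟨X.s q.1.2, by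
        show X.Homologous x₀ (X.s q.1.2) ((q.1.1 ++ [q.1.2]) ++ [X.inv q.1.2]) q.1.1
        exact X.hom_cancel_pair x₀ q⟩) e
  inv_inv := fun e =>
    @Quot.ind _ _ (fun e => X.barInv x₀ (X.barInv x₀ e) = e)
      (fun q => Quot.sound ⟨by show X.inv (X.inv q.1.2) = q.1.2; rw [X.inv_inv], by
        show X.Homologous x₀ (X.s (X.inv (X.inv q.1.2)))
          ((q.1.1 ++ [q.1.2]) ++ [X.inv q.1.2]) q.1.1
        rw [X.inv_inv]
        exact X.hom_cancel_pair x₀ q⟩) e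
  inv_ne := fun e =>
    @Quot.ind _ _ (fun e => X.barInv x₀ e ≠ e)
      (fun q h => X.inv_ne q.1.2 (congrArg (X.eproj x₀) h)) e

/-- The covering map from the maximal abelian cover to `X`. -/
def proj (x₀ : X.V) : Hom (X.Bar x₀) X where
  vMap := X.atomEnd x₀
  eMap := X.eproj x₀
  map_s := fun e =>
    @Quot.ind _ _ (fun e => X.s (X.eproj x₀ e) = X.atomEnd x₀ (X.barS x₀ e))
      (fun q => (q.2.endFrom_eq).symm) e
  map_t := fun e =>
    @Quot.ind _ _ (fun e => X.t (X.eproj x₀ e) = X.atomEnd x₀ (X.barT x₀ e))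
      (fun q => ((q.2.append (X.isPath_single q.1.2)).endFrom_eq).symm) e
  map_inv := fun e =>
    @Quot.ind _ _ (fun e => X.inv (X.eproj x₀ e) = X.eproj x₀ (X.barInv x₀ e))
      (fun q => rfl) e

/-- `g` covers `f` when `q ∘ g = f ∘ q`. -/
def Covers (x₀ : X.V) (g : Aut (X.Bar x₀)) (f : Aut X) : Prop :=
  Hom.comp (X.proj x₀) g.toHom = Hom.comp f.toHom (X.proj x₀)

/-- The group of covering symmetries: automorphisms of the maximal abelian cover
that cover some automorphism of `X`. -/
def Cov (x₀ : X.V) : Subgroup (Aut (X.Bar x₀)) where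
  carrier := {g | ∃ f : Aut X, X.Covers x₀ g f}
  one_mem' := ⟨1, rfl⟩
  mul_mem' := by
    rintro a b ⟨f, hf⟩ ⟨f', hf'⟩
    refine ⟨f * f', ?_⟩
    show Hom.comp (X.proj x₀) (Hom.comp a.toHom b.toHom)
        = Hom.comp (Hom.comp f.toHom f'.toHom) (X.proj x₀)
    calc Hom.comp (X.proj x₀) (Hom.comp a.toHom b.toHom)
        = Hom.comp (Hom.comp (X.proj x₀) a.toHom) b.toHom := rfl
      _ = Hom.comp (Hom.comp f.toHom (X.proj x₀)) b.toHom := by rw [hf]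
      _ = Hom.comp f.toHom (Hom.comp (X.proj x₀) b.toHom) := rfl
      _ = Hom.comp f.toHom (Hom.comp f'.toHom (X.proj x₀)) := by rw [hf']
      _ = Hom.comp (Hom.comp f.toHom f'.toHom) (X.proj x₀) := rfl
  inv_mem' := by
    rintro a ⟨f, hf⟩
    refine ⟨f⁻¹, ?_⟩
    show Hom.comp (X.proj x₀) a.invHom = Hom.comp f.invHom (X.proj x₀)
    have key : Hom.comp (Hom.comp f.invHom (X.proj x₀)) a.toHom = X.proj x₀ := by
      calc Hom.comp (Hom.comp f.invHom (X.proj x₀)) a.toHom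
          = Hom.comp f.invHom (Hom.comp (X.proj x₀) a.toHom) := rfl
        _ = Hom.comp f.invHom (Hom.comp f.toHom (X.proj x₀)) := by rw [hf]
        _ = Hom.comp (Hom.comp f.invHom f.toHom) (X.proj x₀) := rfl
        _ = Hom.comp (Hom.idHom X) (X.proj x₀) := by rw [f.left_inv]
        _ = X.proj x₀ := rfl
    calc Hom.comp (X.proj x₀) a.invHom
        = Hom.comp (Hom.comp (Hom.comp f.invHom (X.proj x₀)) a.toHom) a.invHom := by rw [key]
      _ = Hom.comp (Hom.comp f.invHom (X.proj x₀)) (Hom.comp a.toHom a.invHom) := rfl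
      _ = Hom.comp (Hom.comp f.invHom (X.proj x₀)) (Hom.idHom _) := by rw [a.right_inv]
      _ = Hom.comp f.invHom (X.proj x₀) := rfl

end SunadaGraph
namespace SunadaGraph

variable (X : SunadaGraph)

/-- Loops based at `x₀`. -/
def LoopAt (x₀ : X.V) : Type := {γ : List X.E // X.IsPath x₀ x₀ γ}

def H1Rel (x₀ : X.V) (a b : X.LoopAt x₀) : Prop := X.Homologous x₀ x₀ a.1 b.1

/-- The group of homology classes of loops based at `x₀`, with composition as
the group operation: this is `H₁(X,ℤ)`. -/
def H1 (x₀ : X.V) : Type := Quot (X.H1Rel x₀)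

def h1one (x₀ : X.V) : X.H1 x₀ := Quot.mk _ ⟨[], .nil x₀⟩

def h1mul (x₀ : X.V) : X.H1 x₀ → X.H1 x₀ → X.H1 x₀ :=
  Quot.lift
    (fun a => Quot.lift
      (fun b => Quot.mk (X.H1Rel x₀) ⟨a.1 ++ b.1, a.2.append b.2⟩)
      (fun b b' hb => Quot.sound (Homologous.prepend_left a.2 hb)))
    (fun a a' ha => by
      funext b
      refine @Quot.ind _ _
        (fun b => Quot.lift _ _ b = Quot.lift _ _ b) (fun b => ?_) b
      exact Quot.sound (ha.append_right b.2))

def h1inv (x₀ : X.V) : X.H1 x₀ → X.H1 x₀ :=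
  Quot.lift (fun a => Quot.mk (X.H1Rel x₀) ⟨X.revP a.1, a.2.revP⟩)
    (fun a a' h => Quot.sound h.revP)

theorem h1mul_assoc (x₀ : X.V) (a b c : X.H1 x₀) :
    X.h1mul x₀ (X.h1mul x₀ a b) c = X.h1mul x₀ a (X.h1mul x₀ b c) := by
  refine @Quot.ind _ _
    (fun a => ∀ b c, X.h1mul x₀ (X.h1mul x₀ a b) c = X.h1mul x₀ a (X.h1mul x₀ b c))
    (fun a => ?_) a b c
  intro b c
  refine @Quot.ind _ _
    (fun b => ∀ c, X.h1mul x₀ (X.h1mul x₀ (Quot.mk _ a) b) c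
      = X.h1mul x₀ (Quot.mk _ a) (X.h1mul x₀ b c)) (fun b => ?_) b c
  intro c
  refine @Quot.ind _ _
    (fun c => X.h1mul x₀ (X.h1mul x₀ (Quot.mk _ a) (Quot.mk _ b)) c
      = X.h1mul x₀ (Quot.mk _ a) (X.h1mul x₀ (Quot.mk _ b) c)) (fun c => ?_) c
  exact congrArg (Quot.mk _) (Subtype.ext (List.append_assoc a.1 b.1 c.1))

theorem h1_one_mul (x₀ : X.V) (a : X.H1 x₀) : X.h1mul x₀ (X.h1one x₀) a = a := by
  refine @Quot.ind _ _ (fun a => X.h1mul x₀ (X.h1one x₀) a = a) (fun a => ?_) a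
  rfl

theorem h1_mul_one (x₀ : X.V) (a : X.H1 x₀) : X.h1mul x₀ a (X.h1one x₀) = a := by
  refine @Quot.ind _ _ (fun a => X.h1mul x₀ a (X.h1one x₀) = a) (fun a => ?_) a
  exact congrArg (Quot.mk _) (Subtype.ext (List.append_nil a.1))

theorem h1_inv_mul (x₀ : X.V) (a : X.H1 x₀) :
    X.h1mul x₀ (X.h1inv x₀ a) a = X.h1one x₀ := by
  refine @Quot.ind _ _ (fun a => X.h1mul x₀ (X.h1inv x₀ a) a = X.h1one x₀)
    (fun a => ?_) a
  exact Quot.sound (homologous_revP_append a.2)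

instance instGroupH1 (x₀ : X.V) : Group (X.H1 x₀) where
  one := X.h1one x₀
  mul := X.h1mul x₀
  inv := X.h1inv x₀
  mul_assoc := X.h1mul_assoc x₀
  one_mul := X.h1_one_mul x₀
  mul_one := X.h1_mul_one x₀
  inv_mul_cancel := X.h1_inv_mul x₀

theorem boundary_add (c d : ↥X.C1) : X.boundary (c + d) = X.boundary c + X.boundary d := by
  show Finsupp.sum ((c : X.E →₀ ℝ) + (d : X.E →₀ ℝ)) _ = _
  exact Finsupp.sum_add_index' (fun e => zero_smul ℝ _) (fun e x y => add_smul x y _)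

theorem boundary_smul (r : ℝ) (c : ↥X.C1) : X.boundary (r • c) = r • X.boundary c := by
  unfold boundary
  have hc : ((r • c : ↥X.C1) : X.E →₀ ℝ) = r • (c : X.E →₀ ℝ) := rfl
  rw [hc, Finsupp.sum_smul_index, Finsupp.smul_sum]
  · exact Finsupp.sum_congr fun e _ => by rw [mul_smul]
  · intro e
    exact zero_smul ℝ _

theorem boundary_zero : X.boundary 0 = 0 := by
  show Finsupp.sum (0 : X.E →₀ ℝ) _ = 0
  exact Finsupp.sum_zero_index

/-- The space `Z₁(X,ℝ)` of 1-cycles, as a subspace of `C₁(X,ℝ)`. -/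
noncomputable def Z1 : Submodule ℝ ↥X.C1 where
  carrier := {c | X.IsCycle c}
  add_mem' := fun {a b} ha hb => by
    show X.IsCycle (a + b)
    unfold IsCycle at *
    rw [X.boundary_add, ha, hb, add_zero]
  zero_mem' := X.boundary_zero
  smul_mem' := fun r c hc => by
    show X.IsCycle (r • c)
    unfold IsCycle at *
    rw [X.boundary_smul, hc, smul_zero]

/-- A map of the space of 1-cycles is affine if it is a linear map followed by
a translation. -/
def IsAffine (T : ↥X.Z1 → ↥X.Z1) : Prop :=
  ∃ (L : ↥X.Z1 →ₗ[ℝ] ↥X.Z1) (v : ↥X.Z1), ∀ c, T c = v + L c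

/-- The permutation of edges induced by an automorphism. -/
def eEquiv (f : X.Aut) : X.E ≃ X.E where
  toFun := f.toHom.eMap
  invFun := f.invHom.eMap
  left_inv := fun e => congrFun (congrArg Hom.eMap f.left_inv) e
  right_inv := fun e => congrFun (congrArg Hom.eMap f.right_inv) e

/-- The linear action `f_*` of an automorphism `f` on 1-chains, with
`f_*(e) = f(e)` for every edge. -/
noncomputable def pushChain (f : X.Aut) (c : ↥X.C1) : ↥X.C1 :=
  ⟨Finsupp.equivMapDomain (X.eEquiv f) (c : X.E →₀ ℝ), by
    intro e
    rw [Finsupp.equivMapDomain_apply, Finsupp.equivMapDomain_apply]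
    have h1 : (X.eEquiv f).symm (X.inv e) = X.inv ((X.eEquiv f).symm e) := by
      show f.invHom.eMap (X.inv e) = X.inv (f.invHom.eMap e)
      exact (f.invHom.map_inv e).symm
    rw [h1]
    exact c.2 _⟩

/-- The image of the atom `⟦δ⟧` under the covering symmetry determined by the
pair `(f, ⟦β⟧)`: the atom `⟦β f(δ)⟧`. -/
def mapPathFrom (x₀ : X.V) (f : X.Aut) (β : List X.E)
    (hβ : X.IsPath x₀ (f.toHom.vMap x₀) β) (δ : X.PathFrom x₀) : X.PathFrom x₀ :=
  ⟨β ++ δ.1.map f.toHom.eMap, by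
    obtain ⟨y, hy⟩ := δ.2
    exact ⟨f.toHom.vMap y, hβ.append (hy.map f.toHom)⟩⟩

/-- The image of the edge `(⟦α⟧, e)` under the covering symmetry determined by the
pair `(f, ⟦β⟧)`: the edge `(⟦β f(α)⟧, f(e))`. -/
def mapBarBase (x₀ : X.V) (f : X.Aut) (β : List X.E)
    (hβ : X.IsPath x₀ (f.toHom.vMap x₀) β) (q : X.BarBase x₀) : X.BarBase x₀ :=
  ⟨(β ++ q.1.1.map f.toHom.eMap, f.toHom.eMap q.1.2), by
    show X.IsPath x₀ (X.s (f.toHom.eMap q.1.2)) _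
    rw [f.toHom.map_s]
    exact hβ.append (q.2.map f.toHom)⟩

/-- The automorphism `g` of the maximal abelian cover acts as the pair `(f, ⟦β⟧)`:
it maps each atom `⟦α⟧` to `⟦β f(α)⟧` and each edge `(⟦α⟧, e)` to `(⟦β f(α)⟧, f(e))`. -/
def ActsAs (x₀ : X.V) (g : Aut (X.Bar x₀)) (f : X.Aut) (β : List X.E) : Prop :=
  ∃ hβ : X.IsPath x₀ (f.toHom.vMap x₀) β,
    (∀ δ : X.PathFrom x₀,
      g.toHom.vMap (Quot.mk _ δ) = Quot.mk _ (X.mapPathFrom x₀ f β hβ δ)) ∧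
    (∀ q : X.BarBase x₀,
      g.toHom.eMap (Quot.mk _ q) = Quot.mk _ (X.mapBarBase x₀ f β hβ q))

/-- The automorphism `g` of the maximal abelian cover is the deck transformation
determined by the loop `γ` based at `x₀`: it maps each atom `⟦δ⟧` to `⟦γδ⟧`. -/
def IsDeck (x₀ : X.V) (g : Aut (X.Bar x₀)) (γ : X.LoopAt x₀) : Prop :=
  ∀ δ : X.PathFrom x₀, g.toHom.vMap (Quot.mk _ δ) =
    Quot.mk _ (⟨γ.1 ++ δ.1, by
      obtain ⟨y, hy⟩ := δ.2
      exact ⟨y, γ.2.append hy⟩⟩ : X.PathFrom x₀)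

/-- `ρ` is an action of the group of covering symmetries by affine transformations
of `Z₁(X,ℝ)` for which the embedding of the atoms is equivariant:
`ρ(g)(i(⟦α⟧)) = i(g(⟦α⟧))`. -/
def GoodAction (x₀ : X.V) (π : ↥X.C1 → ↥X.C1)
    (ρ : ↥(X.Cov x₀) → (↥X.Z1 → ↥X.Z1)) : Prop :=
  ρ 1 = id ∧ (∀ g h, ρ (g * h) = ρ g ∘ ρ h) ∧ (∀ g, X.IsAffine (ρ g)) ∧
  ∀ (g : ↥(X.Cov x₀)) (α δ : X.PathFrom x₀),
    g.1.toHom.vMap (Quot.mk _ α) = Quot.mk _ δ →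
    ∀ z w : ↥X.Z1, (z : ↥X.C1) = π (X.pathChain α.1) →
      (w : ↥X.C1) = π (X.pathChain δ.1) → ρ g z = w

end SunadaGraph

/-!
Fix base paths `bp v` from `x₀` to every vertex and attach to each edge `e` the class of the
loop `bp (s e) · e · (bp (t e))⁻¹`. As `H₁` is commutative, the class of a loop at `x₀` is the
product of these classes over its edges, and such a product only depends on the 1-chain of the
loop, since an edge and its inverse contribute inverse factors: this gives injectivity.
Conversely, the chain of the loop attached to `e` is `e - ½ L (∂e)`, where `L` sends a vertex to
the chain of its base path. The integral chains are the ℤ-combinations of edges, so every integral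
chain `c` is the image of a class up to the correction `½ L (∂c)`, which vanishes on cycles.
-/

namespace SunadaGraph

open scoped Classical

variable {X : SunadaGraph}

@[simp]
theorem pathChain_nil : X.pathChain [] = 0 := rfl

@[simp]
theorem pathChain_cons (e : X.E) (l : List X.E) :
    X.pathChain (e :: l) = X.edgeChain e + X.pathChain l := by
  simp [pathChain]

@[simp]
theorem pathChain_append (a b : List X.E) :
    X.pathChain (a ++ b) = X.pathChain a + X.pathChain b := by
  simp [pathChain]

theorem pathChain_eq_of_perm {a b : List X.E} (h : a.Perm b) :
    X.pathChain a = X.pathChain b :=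
  (h.map _).sum_eq

theorem edgeChain_inv (e : X.E) : X.edgeChain (X.inv e) = -X.edgeChain e := by
  apply Subtype.ext
  change Finsupp.single (X.inv e) 1 - Finsupp.single (X.inv (X.inv e)) 1
    = -(Finsupp.single e 1 - Finsupp.single (X.inv e) (1 : ℝ))
  rw [X.inv_inv, neg_sub]

@[simp]
theorem pathChain_revP (l : List X.E) : X.pathChain (X.revP l) = -X.pathChain l := by
  induction l with
  | nil => exact (neg_zero (G := X.C1)).symm
  | cons e l ih =>
    have : X.revP (e :: l) = X.revP l ++ [X.inv e] := by simp [revP]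
    rw [this, pathChain_append, ih, pathChain_cons, pathChain_cons, edgeChain_inv,
      pathChain_nil]
    abel

@[simp]
theorem revP_revP (l : List X.E) : X.revP (X.revP l) = l := by
  simp [revP, Function.comp_def, X.inv_inv]

theorem Homologous.pathChain_eq {x y : X.V} {a b : List X.E} (h : X.Homologous x y a b) :
    X.pathChain a = X.pathChain b := by
  induction h with
  | refl => rfl
  | cancel γ δ e => simp only [pathChain_append, pathChain_cons, edgeChain_inv]; abel
  | swap γ σ τ δ => simp only [pathChain_append]; abel
  | symm _ ih => exact ih.symm
  | trans _ _ ih₁ ih₂ => exact ih₁.trans ih₂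

theorem edgeChain_apply (e f : X.E) :
    (X.edgeChain e : X.E →₀ ℝ) f
      = (if e = f then 1 else 0) - (if X.inv e = f then 1 else 0) := by
  simp [edgeChain, Finsupp.single_apply]

theorem pathChain_apply (l : List X.E) (f : X.E) :
    (X.pathChain l : X.E →₀ ℝ) f = (l.count f : ℝ) - l.count (X.inv f) := by
  have inv_eq_iff (e : X.E) : X.inv e = f ↔ e = X.inv f :=
    ⟨fun h => h ▸ (X.inv_inv e).symm, fun h => h ▸ X.inv_inv f⟩
  induction l with
  | nil => simp
  | cons e l ih =>
    rw [pathChain_cons, Submodule.coe_add, Finsupp.add_apply, ih, edgeChain_apply,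
      List.count_cons, List.count_cons, inv_eq_iff]
    simp only [beq_iff_eq]
    split_ifs <;> push_cast <;> ring

theorem isIntegral_pathChain (l : List X.E) : X.IsIntegral (X.pathChain l) :=
  fun f => ⟨l.count f - l.count (X.inv f), by rw [pathChain_apply]; push_cast; rfl⟩

noncomputable def boundaryₗ (X : SunadaGraph) : X.C1 →ₗ[ℝ] X.V →₀ ℝ where
  toFun := X.boundary
  map_add' := X.boundary_add
  map_smul' := X.boundary_smul

theorem boundary_edgeChain (e : X.E) :
    X.boundary (X.edgeChain e)
      = (2 : ℝ) • (Finsupp.single (X.t e) 1 - Finsupp.single (X.s e) 1) := by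
  have hsplit : (X.edgeChain e : X.E →₀ ℝ)
      = Finsupp.single e 1 + Finsupp.single (X.inv e) (-1) := by
    rw [Finsupp.single_neg, ← sub_eq_add_neg]; rfl
  rw [boundary, hsplit, Finsupp.sum_add_index' (fun _ => by simp) (fun _ _ _ => add_smul _ _ _),
    Finsupp.sum_single_index (by simp), Finsupp.sum_single_index (by simp),
    X.t_inv, X.s_inv, two_smul]
  simp only [one_smul, neg_smul]
  abel

theorem boundary_pathChain {u v : X.V} {l : List X.E} (h : X.IsPath u v l) :
    X.boundary (X.pathChain l) = (2 : ℝ) • (Finsupp.single v 1 - Finsupp.single u 1) := by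
  induction h with
  | nil x => simp [X.boundary_zero]
  | cons e h ih =>
    rw [pathChain_cons, X.boundary_add, boundary_edgeChain, ih, ← smul_add]
    abel_nf

theorem IsPath.isCycle_pathChain {x : X.V} {l : List X.E} (h : X.IsPath x x l) :
    X.IsCycle (X.pathChain l) := by
  simp [IsCycle, boundary_pathChain h]

theorem mem_closure_range_edgeChain_of_isIntegral {c : X.C1} (hc : X.IsIntegral c) :
    c ∈ AddSubgroup.closure (Set.range X.edgeChain) := by
  induction h : (c : X.E →₀ ℝ).support.card using Nat.strong_induction_on generalizing c with
  | _ n ih =>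
  by_cases hc0 : c = 0
  · rw [hc0]; exact zero_mem _
  obtain ⟨e, he⟩ : ∃ e, (c : X.E →₀ ℝ) e ≠ 0 := by
    by_contra! h0
    exact hc0 (Subtype.ext (Finsupp.ext h0))
  obtain ⟨m, hm⟩ := hc e
  set c' := c - m • X.edgeChain e with hc'
  have hc'_apply (f : X.E) :
      (c' : X.E →₀ ℝ) f = (c : X.E →₀ ℝ) f - m * (X.edgeChain e : X.E →₀ ℝ) f := by
    simp [c']
  have hsupp : (c' : X.E →₀ ℝ).support ⊆ (c : X.E →₀ ℝ).support.erase e := by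
    intro f hf
    rw [Finsupp.mem_support_iff, hc'_apply, edgeChain_apply] at hf
    have hinv : (c : X.E →₀ ℝ) (X.inv e) ≠ 0 := by rw [c.2 e]; exact neg_ne_zero.mpr he
    rw [Finset.mem_erase, Finsupp.mem_support_iff]
    by_cases hfe : e = f
    · subst hfe; simp [X.inv_ne, hm] at hf
    · by_cases hfi : X.inv e = f
      · subst hfi; exact ⟨X.inv_ne e, hinv⟩
      · simp only [hfe, hfi, if_false, sub_zero, mul_zero] at hf
        exact ⟨Ne.symm hfe, hf⟩
  have hcard : (c' : X.E →₀ ℝ).support.card < n := by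
    rw [← h]
    exact (Finset.card_le_card hsupp).trans_lt
      (Finset.card_erase_lt_of_mem (Finsupp.mem_support_iff.mpr he))
  have hint' : X.IsIntegral c' := by
    intro f
    obtain ⟨k, hk⟩ := hc f
    obtain ⟨l, hl⟩ := isIntegral_pathChain [e] f
    rw [pathChain_cons, pathChain_nil, add_zero] at hl
    exact ⟨k - m * l, by rw [hc'_apply, hk, hl]; push_cast; rfl⟩
  rw [show c = c' + m • X.edgeChain e by rw [hc']; abel]
  exact add_mem (ih _ hcard hint' rfl)
    (zsmul_mem (AddSubgroup.subset_closure (Set.mem_range_self e)) m)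

theorem inv_mem_of_pathChain_eq_zero {l : List X.E} (hl : X.pathChain l = 0) {e : X.E}
    (he : e ∈ l) : X.inv e ∈ l := by
  have hcount : l.count e = l.count (X.inv e) := by
    have := pathChain_apply l e
    rw [hl] at this
    exact_mod_cast (sub_eq_zero.mp this.symm)
  exact List.count_pos_iff.mp (hcount ▸ List.count_pos_iff.mpr he)

theorem prod_map_eq_one_of_pathChain_eq_zero {G : Type*} [CommGroup G] {φ : X.E → G}
    (hφ : ∀ e, φ (X.inv e) = (φ e)⁻¹) {l : List X.E} (hl : X.pathChain l = 0) :
    (l.map φ).prod = 1 := by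
  induction h : l.length using Nat.strong_induction_on generalizing l with
  | _ n ih =>
  match l, hl with
  | [], _ => rfl
  | e :: l', hl =>
    have hmem : X.inv e ∈ l' :=
      (List.mem_cons.mp (inv_mem_of_pathChain_eq_zero hl List.mem_cons_self)).resolve_left
        (X.inv_ne e)
    have hperm := List.perm_cons_erase hmem
    have hchain : X.pathChain (l'.erase (X.inv e)) = 0 := by
      rw [← hl, pathChain_cons, pathChain_eq_of_perm hperm, pathChain_cons, edgeChain_inv]
      abel
    rw [List.map_cons, List.prod_cons, (hperm.map φ).prod_eq, List.map_cons, List.prod_cons,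
      hφ, mul_inv_cancel_left]
    exact ih _ (by simp [← h, List.length_erase_of_mem hmem]) hchain rfl

theorem prod_map_eq_of_pathChain_eq {G : Type*} [CommGroup G] {φ : X.E → G}
    (hφ : ∀ e, φ (X.inv e) = (φ e)⁻¹) {a b : List X.E} (hab : X.pathChain a = X.pathChain b) :
    (a.map φ).prod = (b.map φ).prod := by
  have hrev : ((X.revP b).map φ).prod = (b.map φ).prod⁻¹ := by
    simp [revP, List.prod_reverse, List.prod_inv_reverse, Function.comp_def, hφ]
  have := prod_map_eq_one_of_pathChain_eq_zero hφ (l := a ++ X.revP b)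
    (by rw [pathChain_append, pathChain_revP, hab]; abel)
  rwa [List.map_append, List.prod_append, hrev, mul_inv_eq_one] at this

section H1

variable {x₀ : X.V}

def H1.mk (γ : List X.E) (hγ : X.IsPath x₀ x₀ γ) : X.H1 x₀ := Quot.mk _ ⟨γ, hγ⟩

theorem H1.mk_mul_mk {γ δ : List X.E} (hγ : X.IsPath x₀ x₀ γ) (hδ : X.IsPath x₀ x₀ δ) :
    H1.mk γ hγ * H1.mk δ hδ = H1.mk (γ ++ δ) (hγ.append hδ) := rfl

theorem H1.mk_inv {γ : List X.E} (hγ : X.IsPath x₀ x₀ γ) :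
    (H1.mk γ hγ)⁻¹ = H1.mk (X.revP γ) hγ.revP := rfl

theorem H1.mk_eq_mk {γ δ : List X.E} {hγ : X.IsPath x₀ x₀ γ} {hδ : X.IsPath x₀ x₀ δ}
    (h : X.Homologous x₀ x₀ γ δ) : H1.mk γ hγ = H1.mk δ hδ :=
  Quot.sound h

theorem H1.mul_comm (a b : X.H1 x₀) : a * b = b * a := by
  induction a using Quot.ind with | mk γ =>
  induction b using Quot.ind with | mk δ =>
  have hγδ : X.IsPath x₀ x₀ ([] ++ (γ.1 ++ (δ.1 ++ []))) := by simpa using γ.2.append δ.2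
  have hδγ : X.IsPath x₀ x₀ ([] ++ (δ.1 ++ (γ.1 ++ []))) := by simpa using δ.2.append γ.2
  exact H1.mk_eq_mk (hγ := γ.2.append δ.2) (hδ := δ.2.append γ.2)
    (by simpa using Homologous.swap [] γ.1 δ.1 [] x₀ γ.2 δ.2 hγδ hδγ)

abbrev H1.commGroup : CommGroup (X.H1 x₀) where
  mul_comm := H1.mul_comm

attribute [local instance] H1.commGroup

theorem H1.mk_conj {β γ : List X.E} (hβ : X.IsPath x₀ x₀ β) (hγ : X.IsPath x₀ x₀ γ) :
    H1.mk (β ++ (γ ++ X.revP β)) (hβ.append (hγ.append hβ.revP)) = H1.mk γ hγ :=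
  calc _ = H1.mk β hβ * (H1.mk γ hγ * (H1.mk β hβ)⁻¹) := rfl
    _ = H1.mk γ hγ := mul_inv_cancel_comm_assoc _ _

noncomputable def chainMap (X : SunadaGraph) (x₀ : X.V) : X.H1 x₀ → X.C1 :=
  Quot.lift (fun γ => X.pathChain γ.1) fun _ _ h => h.pathChain_eq

theorem chainMap_mul (a b : X.H1 x₀) :
    X.chainMap x₀ (a * b) = X.chainMap x₀ a + X.chainMap x₀ b := by
  induction a using Quot.ind
  induction b using Quot.ind
  exact pathChain_append _ _

theorem chainMap_inv (a : X.H1 x₀) : X.chainMap x₀ a⁻¹ = -X.chainMap x₀ a := by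
  induction a using Quot.ind
  exact pathChain_revP _

section BasePaths

variable {bp : X.V → List X.E} (hbp : ∀ v, X.IsPath x₀ v (bp v))

def edgeLoopClass (e : X.E) : X.H1 x₀ :=
  H1.mk (bp (X.s e) ++ e :: X.revP (bp (X.t e))) ((hbp _).append (.cons e (hbp _).revP))

theorem edgeLoopClass_inv (e : X.E) :
    edgeLoopClass hbp (X.inv e) = (edgeLoopClass hbp e)⁻¹ := by
  rw [edgeLoopClass, edgeLoopClass, H1.mk_inv]
  congr 1
  simp [revP, X.s_inv, X.t_inv, X.inv_inv, Function.comp_def]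

theorem mk_eq_prod_edgeLoopClass {u v : X.V} {p : List X.E} (hp : X.IsPath u v p) :
    H1.mk (bp u ++ (p ++ X.revP (bp v))) ((hbp u).append (hp.append (hbp v).revP))
      = (p.map (edgeLoopClass hbp)).prod := by
  induction hp with
  | nil x =>
    refine H1.mk_eq_mk ?_
    simpa using homologous_revP_append (hbp x).revP
  | @cons e y γ h ih =>
    rw [List.map_cons, List.prod_cons, ← ih, edgeLoopClass, H1.mk_mul_mk]
    refine H1.mk_eq_mk ?_
    have hA := (hbp (X.s e)).append (X.isPath_single e)
    have hC := h.append (hbp y).revP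
    simpa using
      (Homologous.prepend_left hA ((homologous_revP_append (hbp (X.t e))).append_right hC)).symm

theorem mk_eq_prod_edgeLoopClass_of_loop {γ : List X.E} (hγ : X.IsPath x₀ x₀ γ) :
    H1.mk γ hγ = (γ.map (edgeLoopClass hbp)).prod := by
  rw [← H1.mk_conj (hbp x₀) hγ, mk_eq_prod_edgeLoopClass hbp hγ]

theorem chainMap_edgeLoopClass (e : X.E) :
    X.chainMap x₀ (edgeLoopClass hbp e)
      = X.edgeChain e - (X.pathChain (bp (X.t e)) - X.pathChain (bp (X.s e))) := by
  change X.pathChain _ = _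
  simp only [pathChain_append, pathChain_cons, pathChain_revP]
  abel

/-- `c ↦ ½ L (∂c)`, where the linear map `L` sends a vertex `v` to the chain of `bp v`; the
factor `½` compensates for `boundary (edgeChain e) = 2 • (t e - s e)`. -/
noncomputable def basePathCorrection (bp : X.V → List X.E) : X.C1 →ₗ[ℝ] X.C1 :=
  (1 / 2 : ℝ) • (Finsupp.linearCombination ℝ (fun v => X.pathChain (bp v)) ∘ₗ X.boundaryₗ)

theorem basePathCorrection_edgeChain (e : X.E) :
    basePathCorrection bp (X.edgeChain e)
      = X.pathChain (bp (X.t e)) - X.pathChain (bp (X.s e)) := by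
  simp [basePathCorrection, boundaryₗ, boundary_edgeChain, smul_smul]

end BasePaths

theorem chainMap_injective (hconn : X.Connected) : Function.Injective (X.chainMap x₀) := by
  choose bp hbp using hconn x₀
  intro a b hab
  induction a using Quot.ind with | mk γ =>
  induction b using Quot.ind with | mk δ =>
  change H1.mk γ.1 γ.2 = H1.mk δ.1 δ.2
  rw [mk_eq_prod_edgeLoopClass_of_loop hbp, mk_eq_prod_edgeLoopClass_of_loop hbp]
  exact prod_map_eq_of_pathChain_eq (edgeLoopClass_inv hbp) hab

theorem exists_chainMap_eq_sub_basePathCorrection {bp : X.V → List X.E}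
    (hbp : ∀ v, X.IsPath x₀ v (bp v)) {c : X.C1}
    (hc : c ∈ AddSubgroup.closure (Set.range X.edgeChain)) :
    ∃ a, X.chainMap x₀ a = c - basePathCorrection bp c := by
  induction hc using AddSubgroup.closure_induction with
  | mem _ hc =>
    obtain ⟨e, rfl⟩ := hc
    exact ⟨edgeLoopClass hbp e, by rw [chainMap_edgeLoopClass, basePathCorrection_edgeChain]⟩
  | zero => exact ⟨1, by rw [map_zero]; exact (sub_self (0 : X.C1)).symm⟩
  | add c d _ _ hc hd =>
    obtain ⟨a, ha⟩ := hc
    obtain ⟨b, hb⟩ := hd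
    exact ⟨a * b, by rw [chainMap_mul, ha, hb, map_add]; abel⟩
  | neg c _ hc =>
    obtain ⟨a, ha⟩ := hc
    exact ⟨a⁻¹, by rw [chainMap_inv, ha, map_neg]; abel⟩

theorem range_chainMap (hconn : X.Connected) :
    Set.range (X.chainMap x₀) = {c | X.IsCycle c ∧ X.IsIntegral c} := by
  ext c
  constructor
  · rintro ⟨a, rfl⟩
    induction a using Quot.ind with | mk γ =>
    exact ⟨γ.2.isCycle_pathChain, isIntegral_pathChain γ.1⟩
  · rintro ⟨hcyc, hint⟩
    choose bp hbp using hconn x₀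
    obtain ⟨a, ha⟩ := exists_chainMap_eq_sub_basePathCorrection hbp
      (mem_closure_range_edgeChain_of_isIntegral hint)
    have hcorr : basePathCorrection bp c = 0 := by
      simp [basePathCorrection, boundaryₗ, show X.boundary c = 0 from hcyc]
    exact ⟨a, by rw [ha, hcorr]; abel⟩

end H1

end SunadaGraph

/-- For a connected graph `X` with basepoint `x₀`, the homology
classes of loops based at `x₀` form a group under composition (the group `X.H1 x₀`
constructed above), and the map `⟦γ⟧ ↦ c_γ` is a well-defined group isomorphism from
this group onto the group `Z₁(X,ℤ)` of integral 1-cycles. -/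
theorem loop_classes_iso_integral_cycles (X : SunadaGraph) (hconn : X.Connected) (x₀ : X.V) :
    ∃ θ : X.H1 x₀ → ↥X.C1,
      (∀ γ : X.LoopAt x₀, θ (Quot.mk _ γ) = X.pathChain γ.1) ∧
      (∀ a b : X.H1 x₀, θ (a * b) = θ a + θ b) ∧
      Function.Injective θ ∧
      Set.range θ = {c : ↥X.C1 | X.IsCycle c ∧ X.IsIntegral c} :=
  ⟨X.chainMap x₀, fun _ => rfl, SunadaGraph.chainMap_mul, SunadaGraph.chainMap_injective hconn,
    SunadaGraph.range_chainMap hconn⟩
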